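/- arXiv:2005.06722 — 5 statements merged into one kernel-verified Lean document; each statement's English description precedes it below -/
import Mathlib

section
/- Let n ≥ 1 be an integer and ψ ∈ ℂ. If there exists a nonzero point x = (x_0, …, x_{n+1}) ∈ ℂ^{n+2} such that f_ψ(x) = 0 and all partial derivatives ∂f_ψ/∂x_i(x) = (n+2)·x_i^{n+1} − (n+2)·ψ·∏_{j≠i} x_j vanish at x, then ψ^{n+2} = 1. (Consequently, the fiber X_ψ of the Fermat pencil is a smooth hypersurface whenever ψ^{n+2} ≠ 1.) -/
/-- If the Fermat pencil polynomial `f_ψ(x) = ∑ x_i^{n+2} − (n+2)·ψ·∏ x_i` and all of its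
partial derivatives `(n+2)·x_i^{n+1} − (n+2)·ψ·∏_{j≠i} x_j` vanish at some nonzero point
`x ∈ ℂ^{n+2}`, then `ψ^{n+2} = 1`. -/
theorem fermat_pencil_singular_implies_unit_root (n : ℕ) (hn : 1 ≤ n) (ψ : ℂ)
    (x : Fin (n + 2) → ℂ) (hx : x ≠ 0)
    (hf : ∑ i, x i ^ (n + 2) - ((n : ℂ) + 2) * ψ * ∏ i, x i = 0)
    (hd : ∀ i, ((n : ℂ) + 2) * x i ^ (n + 1)
        - ((n : ℂ) + 2) * ψ * ∏ j ∈ Finset.univ.erase i, x j = 0) :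
    ψ ^ (n + 2) = 1 := by
  have hn2 : ((n : ℂ) + 2) ≠ 0 := by
    intro h
    have := congrArg Complex.re h
    simp at this
    have h0 : (0:ℝ) ≤ (n:ℝ) := Nat.cast_nonneg n
    linarith
  -- each derivative equation simplifies
  have key : ∀ i, x i ^ (n + 1) = ψ * ∏ j ∈ Finset.univ.erase i, x j := by
    intro i
    have h := hd i
    have h2 : ((n : ℂ) + 2) * (x i ^ (n + 1) - ψ * ∏ j ∈ Finset.univ.erase i, x j) = 0 := by
      linear_combination h
    rcases mul_eq_zero.mp h2 with h' | h'
    · exact absurd h' hn2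
    · exact sub_eq_zero.mp h'
  -- all coordinates are nonzero
  have hall : ∀ i, x i ≠ 0 := by
    intro i hi
    apply hx
    funext j
    by_cases hji : j = i
    · simpa [hji] using hi
    · have hz : (∏ k ∈ Finset.univ.erase j, x k) = 0 := by
        apply Finset.prod_eq_zero (i := i)
        · exact Finset.mem_erase.mpr ⟨fun h => hji h.symm, Finset.mem_univ i⟩
        · exact hi
      have := key j
      rw [hz, mul_zero] at this
      exact pow_eq_zero_iff (Nat.succ_ne_zero n) |>.mp this
  set P : ℂ := ∏ i, x i with hP
  have hPne : P ≠ 0 := Finset.prod_ne_zero_iff.mpr fun i _ => hall i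
  -- product of the erase-products is P^(n+1)
  have herase : (∏ i, ∏ j ∈ Finset.univ.erase i, x j) = P ^ (n + 1) := by
    have h1 : ∀ i : Fin (n+2), x i * ∏ j ∈ Finset.univ.erase i, x j = P :=
      fun i => Finset.mul_prod_erase Finset.univ x (Finset.mem_univ i)
    have h2 : (∏ i : Fin (n+2), (x i * ∏ j ∈ Finset.univ.erase i, x j)) = P ^ (n + 2) := by
      rw [Finset.prod_congr rfl fun i _ => h1 i]
      simp
    rw [Finset.prod_mul_distrib, ← hP] at h2
    have h3 : P * (∏ i, ∏ j ∈ Finset.univ.erase i, x j) = P * P ^ (n + 1) :=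
      h2.trans (by ring)
    exact mul_left_cancel₀ hPne h3
  -- take product of key over all i
  have hprod : P ^ (n + 1) = ψ ^ (n + 2) * P ^ (n + 1) := by
    calc P ^ (n + 1) = ∏ i, x i ^ (n + 1) := by
          rw [← Finset.prod_pow]
      _ = ∏ i, (ψ * ∏ j ∈ Finset.univ.erase i, x j) :=
          Finset.prod_congr rfl fun i _ => key i
      _ = ψ ^ (n + 2) * ∏ i, ∏ j ∈ Finset.univ.erase i, x j := by
          rw [Finset.prod_mul_distrib, Finset.prod_const]
          simp
      _ = ψ ^ (n + 2) * P ^ (n + 1) := by rw [herase]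
  have hPpow : (P ^ (n + 1)) ≠ 0 := pow_ne_zero _ hPne
  have := mul_right_cancel₀ hPpow (hprod.symm.trans (one_mul _).symm)
  exact this
end

section
/- Let V ⊆ ℂ \ {0} be open and let w : ℂ → ℂ be analytic on V and satisfy on V the Picard–Fuchs equation Θ^4 w(φ) = φ · ((Θ + 4/5)∘(Θ + 3/5)∘(Θ + 2/5)∘(Θ + 1/5)) w(φ), where Θ is the operator (Θ g)(φ) = φ · g'(φ). Let U ⊆ ℂ \ {0} be open with ψ^{-5} ∈ V for all ψ ∈ U, and define u : U → ℂ by u(ψ) = ψ^{-1} · w(ψ^{-5}). Then for every ψ ∈ U: (1 − ψ^5)·u''''(ψ) − 10ψ^4·u'''(ψ) − 25ψ^3·u''(ψ) − 15ψ^2·u'(ψ) − ψ·u(ψ) = 0. -/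
set_option maxHeartbeats 2000000

/-- The operator `Θ = φ·d/dφ` on complex functions. -/
noncomputable def Theta (g : ℂ → ℂ) : ℂ → ℂ := fun z => z * deriv g z

/-- The operator `Θ + c` on complex functions. -/
noncomputable def ThetaAdd (c : ℂ) (g : ℂ → ℂ) : ℂ → ℂ := fun z => Theta g z + c * g z

/-- If `w` is analytic on an open set `V ⊆ ℂ \ {0}` and satisfies the Picard–Fuchs equation
`Θ⁴ w = φ·((Θ+4/5)∘(Θ+3/5)∘(Θ+2/5)∘(Θ+1/5)) w` on `V`, and `U ⊆ ℂ \ {0}` is open with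
`ψ⁻⁵ ∈ V` for all `ψ ∈ U`, then `u(ψ) = ψ⁻¹·w(ψ⁻⁵)` satisfies
`(1−ψ⁵)u'''' − 10ψ⁴u''' − 25ψ³u'' − 15ψ²u' − ψu = 0` on `U`. -/
theorem quintic_picard_fuchs_in_psi (V : Set ℂ) (hVopen : IsOpen V) (hV : V ⊆ {(0 : ℂ)}ᶜ)
    (w : ℂ → ℂ) (hw : AnalyticOnNhd ℂ w V)
    (hode : ∀ φ ∈ V,
      Theta (Theta (Theta (Theta w))) φ =
        φ * (ThetaAdd (4/5) (ThetaAdd (3/5) (ThetaAdd (2/5) (ThetaAdd (1/5) w)))) φ)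
    (U : Set ℂ) (hUopen : IsOpen U) (hU : U ⊆ {(0 : ℂ)}ᶜ)
    (hUV : ∀ ψ ∈ U, ψ ^ (-5 : ℤ) ∈ V)
    (u : ℂ → ℂ) (hu : ∀ ψ, u ψ = ψ⁻¹ * w (ψ ^ (-5 : ℤ))) :
    ∀ ψ ∈ U,
      (1 - ψ ^ 5) * iteratedDeriv 4 u ψ - 10 * ψ ^ 4 * iteratedDeriv 3 u ψ
        - 25 * ψ ^ 3 * iteratedDeriv 2 u ψ - 15 * ψ ^ 2 * deriv u ψ - ψ * u ψ = 0 := by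
  set D : ℕ → ℂ → ℂ := fun k => deriv^[k] w with hDdef
  have hDa : ∀ k : ℕ, AnalyticOnNhd ℂ (D k) V := by
    intro k; induction k with
    | zero => simpa [hDdef] using hw
    | succ k ih =>
      have : D (k+1) = deriv (D k) := by
        simp only [hDdef, Function.iterate_succ_apply']
      rw [this]; exact ih.deriv
  have hder : ∀ (k : ℕ), ∀ φ ∈ V, HasDerivAt (D k) (D (k+1) φ) φ := by
    intro k φ hφ
    have h1 : D (k+1) φ = deriv (D k) φ := by
      simp only [hDdef, Function.iterate_succ_apply']
    rw [h1]
    exact ((hDa k) φ hφ).differentiableAt.hasDerivAt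
  have hcongr : ∀ (f g : ℂ → ℂ), ∀ p ∈ V, (∀ z ∈ V, f z = g z) → deriv f p = deriv g p := by
    intro f g p hp hfg
    exact Filter.EventuallyEq.deriv_eq
      (Filter.eventually_of_mem (hVopen.mem_nhds hp) hfg)
  -- Theta chain
  have hT1 : ∀ z, Theta w z = z * D 1 z := by
    intro z; simp [Theta, hDdef]
  have hT2 : ∀ φ ∈ V, Theta (Theta w) φ = φ * D 1 φ + φ^2 * D 2 φ := by
    intro φ hφ
    have hfun : Theta w = fun z => z * D 1 z := funext hT1
    have h1 : HasDerivAt (fun z : ℂ => z * D 1 z) (1 * D 1 φ + φ * D 2 φ) φ :=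
      (hasDerivAt_id φ).mul (hder 1 φ hφ)
    show φ * deriv (Theta w) φ = _
    rw [hfun, h1.deriv]; ring
  have hT3 : ∀ φ ∈ V, Theta (Theta (Theta w)) φ
      = φ * D 1 φ + 3 * φ^2 * D 2 φ + φ^3 * D 3 φ := by
    intro φ hφ
    have h1 : HasDerivAt (fun z : ℂ => z * D 1 z + z^2 * D 2 z)
        ((1 * D 1 φ + φ * D 2 φ) + ((2 * φ^1) * D 2 φ + φ^2 * D 3 φ)) φ :=
      ((hasDerivAt_id φ).mul (hder 1 φ hφ)).add ((hasDerivAt_pow 2 φ).mul (hder 2 φ hφ))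
    have h2 : deriv (Theta (Theta w)) φ = deriv (fun z : ℂ => z * D 1 z + z^2 * D 2 z) φ :=
      hcongr _ _ φ hφ (fun z hz => hT2 z hz)
    show φ * deriv (Theta (Theta w)) φ = _
    rw [h2, h1.deriv]; ring
  have hT4 : ∀ φ ∈ V, Theta (Theta (Theta (Theta w))) φ
      = φ * D 1 φ + 7 * φ^2 * D 2 φ + 6 * φ^3 * D 3 φ + φ^4 * D 4 φ := by
    intro φ hφ
    have h1 : HasDerivAt (fun z : ℂ => z * D 1 z + 3 * z^2 * D 2 z + z^3 * D 3 z)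
        (((1 * D 1 φ + φ * D 2 φ) + (3 * (2 * φ^1) * D 2 φ + 3 * φ^2 * D 3 φ))
          + ((3 * φ^2) * D 3 φ + φ^3 * D 4 φ)) φ := by
      exact (((hasDerivAt_id φ).mul (hder 1 φ hφ)).add
        ((((hasDerivAt_pow 2 φ).const_mul 3).mul (hder 2 φ hφ)))).add
        ((hasDerivAt_pow 3 φ).mul (hder 3 φ hφ))
    have h2 : deriv (Theta (Theta (Theta w))) φ
        = deriv (fun z : ℂ => z * D 1 z + 3 * z^2 * D 2 z + z^3 * D 3 z) φ :=
      hcongr _ _ φ hφ (fun z hz => hT3 z hz)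
    show φ * deriv (Theta (Theta (Theta w))) φ = _
    rw [h2, h1.deriv]; ring
  -- ThetaAdd chain
  have hB1 : ∀ z, ThetaAdd (1/5) w z = z * D 1 z + (1/5) * D 0 z := by
    intro z; simp [ThetaAdd, Theta, hDdef]
  have hB2 : ∀ φ ∈ V, ThetaAdd (2/5) (ThetaAdd (1/5) w) φ
      = φ^2 * D 2 φ + (8/5) * φ * D 1 φ + (2/25) * D 0 φ := by
    intro φ hφ
    have hfun : ThetaAdd (1/5) w = fun z => z * D 1 z + (1/5) * D 0 z := funext hB1
    have h1 : HasDerivAt (fun z : ℂ => z * D 1 z + (1/5) * D 0 z)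
        ((1 * D 1 φ + φ * D 2 φ) + (1/5) * D 1 φ) φ :=
      ((hasDerivAt_id φ).mul (hder 1 φ hφ)).add ((hder 0 φ hφ).const_mul (1/5))
    show φ * deriv (ThetaAdd (1/5) w) φ + (2/5) * ThetaAdd (1/5) w φ = _
    rw [hfun, h1.deriv]; simp only []; ring
  have hB3 : ∀ φ ∈ V, ThetaAdd (3/5) (ThetaAdd (2/5) (ThetaAdd (1/5) w)) φ
      = φ^3 * D 3 φ + (21/5) * φ^2 * D 2 φ + (66/25) * φ * D 1 φ + (6/125) * D 0 φ := by
    intro φ hφ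
    have h1 : HasDerivAt (fun z : ℂ => z^2 * D 2 z + (8/5) * z * D 1 z + (2/25) * D 0 z)
        (((2 * φ^1) * D 2 φ + φ^2 * D 3 φ) + ((8/5 * 1) * D 1 φ + (8/5 * φ) * D 2 φ)
          + (2/25) * D 1 φ) φ := by
      exact (((hasDerivAt_pow 2 φ).mul (hder 2 φ hφ)).add
        ((((hasDerivAt_id φ).const_mul (8/5:ℂ)).mul (hder 1 φ hφ)))).add
        ((hder 0 φ hφ).const_mul (2/25))
    have h2 : deriv (ThetaAdd (2/5) (ThetaAdd (1/5) w)) φ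
        = deriv (fun z : ℂ => z^2 * D 2 z + (8/5) * z * D 1 z + (2/25) * D 0 z) φ :=
      hcongr _ _ φ hφ (fun z hz => hB2 z hz)
    show φ * deriv (ThetaAdd (2/5) (ThetaAdd (1/5) w)) φ
        + (3/5) * ThetaAdd (2/5) (ThetaAdd (1/5) w) φ = _
    rw [h2, h1.deriv, hB2 φ hφ]; ring
  have hB4 : ∀ φ ∈ V, ThetaAdd (4/5) (ThetaAdd (3/5) (ThetaAdd (2/5) (ThetaAdd (1/5) w))) φ
      = φ^4 * D 4 φ + 8 * φ^3 * D 3 φ + (72/5) * φ^2 * D 2 φ + (24/5) * φ * D 1 φ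
        + (24/625) * D 0 φ := by
    intro φ hφ
    have h1 : HasDerivAt (fun z : ℂ => z^3 * D 3 z + (21/5) * z^2 * D 2 z
          + (66/25) * z * D 1 z + (6/125) * D 0 z)
        ((((3 * φ^2) * D 3 φ + φ^3 * D 4 φ) + ((21/5 * (2 * φ^1)) * D 2 φ + (21/5 * φ^2) * D 3 φ))
          + ((66/25 * 1) * D 1 φ + (66/25 * φ) * D 2 φ) + (6/125) * D 1 φ) φ := by
      exact ((((hasDerivAt_pow 3 φ).mul (hder 3 φ hφ)).add
        ((((hasDerivAt_pow 2 φ).const_mul (21/5:ℂ)).mul (hder 2 φ hφ)))).add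
        ((((hasDerivAt_id φ).const_mul (66/25:ℂ)).mul (hder 1 φ hφ)))).add
        ((hder 0 φ hφ).const_mul (6/125))
    have h2 : deriv (ThetaAdd (3/5) (ThetaAdd (2/5) (ThetaAdd (1/5) w))) φ
        = deriv (fun z : ℂ => z^3 * D 3 z + (21/5) * z^2 * D 2 z
          + (66/25) * z * D 1 z + (6/125) * D 0 z) φ :=
      hcongr _ _ φ hφ (fun z hz => hB3 z hz)
    show φ * deriv (ThetaAdd (3/5) (ThetaAdd (2/5) (ThetaAdd (1/5) w))) φ
        + (4/5) * ThetaAdd (3/5) (ThetaAdd (2/5) (ThetaAdd (1/5) w)) φ = _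
    rw [h2, h1.deriv, hB3 φ hφ]; ring
  have hODE : ∀ φ ∈ V,
      φ * D 1 φ + 7 * φ^2 * D 2 φ + 6 * φ^3 * D 3 φ + φ^4 * D 4 φ
      = φ * (φ^4 * D 4 φ + 8 * φ^3 * D 3 φ + (72/5) * φ^2 * D 2 φ + (24/5) * φ * D 1 φ
        + (24/625) * D 0 φ) := by
    intro φ hφ
    rw [← hT4 φ hφ, ← hB4 φ hφ]
    exact hode φ hφ
  -- ψ side
  have hUne : ∀ s ∈ U, s ≠ 0 := fun s hs => hU hs
  have hzy : ∀ (s : ℂ) (n : ℕ), s ^ (-(n:ℤ)) = s⁻¹ ^ n := fun s n => by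
    rw [zpow_neg, zpow_natCast, inv_pow]
  have hg : ∀ (k : ℕ), ∀ s ∈ U,
      HasDerivAt (fun t : ℂ => D k (t ^ (-5:ℤ))) (-5 * (s^6)⁻¹ * D (k+1) (s ^ (-5:ℤ))) s := by
    intro k s hs
    have hs0 : s ≠ 0 := hUne s hs
    have h1 := hasDerivAt_zpow (-5) s (Or.inl hs0)
    have h2 := (hder k _ (hUV s hs)).comp s h1
    refine h2.congr_deriv ?_
    generalize D (k+1) (s ^ (-5:ℤ)) = a
    try simp only [show (-5-1:ℤ) = -((6:ℕ):ℤ) by norm_num]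
    simp only [hzy, ← inv_pow]
    try push_cast
    ring
  have hE1 : ∀ s ∈ U, HasDerivAt u
      (-(s ^ (-2:ℤ) * D 0 (s ^ (-5:ℤ))) - 5 * (s ^ (-7:ℤ) * D 1 (s ^ (-5:ℤ)))) s := by
    intro s hs
    have hs0 : s ≠ 0 := hUne s hs
    have hfun : u = fun t : ℂ => t ^ (-1:ℤ) * D 0 (t ^ (-5:ℤ)) := by
      funext t; rw [hu t, zpow_neg_one]; rfl
    rw [hfun]
    have h := (hasDerivAt_zpow (-1) s (Or.inl hs0)).mul (hg 0 s hs)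
    refine h.congr_deriv ?_
    simp only [Nat.reduceAdd]
    generalize D 0 (s ^ (-5:ℤ)) = a0
    generalize D 1 (s ^ (-5:ℤ)) = a1
    try simp only [show (-1-1:ℤ) = -((2:ℕ):ℤ) by norm_num]
    try simp only [show (-1:ℤ) = -((1:ℕ):ℤ) by norm_num, show (-2:ℤ) = -((2:ℕ):ℤ) by norm_num,
      show (-7:ℤ) = -((7:ℕ):ℤ) by norm_num]
    simp only [hzy, ← inv_pow]
    try push_cast
    ring
  have hE2 : ∀ s ∈ U, HasDerivAt
      (fun t : ℂ => -(t ^ (-2:ℤ) * D 0 (t ^ (-5:ℤ))) - 5 * (t ^ (-7:ℤ) * D 1 (t ^ (-5:ℤ))))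
      (2 * (s ^ (-3:ℤ) * D 0 (s ^ (-5:ℤ))) + 40 * (s ^ (-8:ℤ) * D 1 (s ^ (-5:ℤ)))
        + 25 * (s ^ (-13:ℤ) * D 2 (s ^ (-5:ℤ)))) s := by
    intro s hs
    have hs0 : s ≠ 0 := hUne s hs
    have h := (((hasDerivAt_zpow (-2) s (Or.inl hs0)).mul (hg 0 s hs)).neg).sub
      (((hasDerivAt_zpow (-7) s (Or.inl hs0)).mul (hg 1 s hs)).const_mul (5:ℂ))
    refine h.congr_deriv ?_
    simp only [Nat.reduceAdd]
    generalize D 0 (s ^ (-5:ℤ)) = a0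
    generalize D 1 (s ^ (-5:ℤ)) = a1
    generalize D 2 (s ^ (-5:ℤ)) = a2
    try simp only [show (-2-1:ℤ) = -((3:ℕ):ℤ) by norm_num, show (-7-1:ℤ) = -((8:ℕ):ℤ) by norm_num]
    try simp only [show (-2:ℤ) = -((2:ℕ):ℤ) by norm_num, show (-3:ℤ) = -((3:ℕ):ℤ) by norm_num,
      show (-7:ℤ) = -((7:ℕ):ℤ) by norm_num, show (-8:ℤ) = -((8:ℕ):ℤ) by norm_num,
      show (-13:ℤ) = -((13:ℕ):ℤ) by norm_num]
    simp only [hzy, ← inv_pow]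
    try push_cast
    ring
  have hE3 : ∀ s ∈ U, HasDerivAt
      (fun t : ℂ => 2 * (t ^ (-3:ℤ) * D 0 (t ^ (-5:ℤ))) + 40 * (t ^ (-8:ℤ) * D 1 (t ^ (-5:ℤ)))
        + 25 * (t ^ (-13:ℤ) * D 2 (t ^ (-5:ℤ))))
      (-(6 * (s ^ (-4:ℤ) * D 0 (s ^ (-5:ℤ)))) - 330 * (s ^ (-9:ℤ) * D 1 (s ^ (-5:ℤ)))
        - 525 * (s ^ (-14:ℤ) * D 2 (s ^ (-5:ℤ))) - 125 * (s ^ (-19:ℤ) * D 3 (s ^ (-5:ℤ)))) s := by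
    intro s hs
    have hs0 : s ≠ 0 := hUne s hs
    have h := ((((hasDerivAt_zpow (-3) s (Or.inl hs0)).mul (hg 0 s hs)).const_mul (2:ℂ)).add
      (((hasDerivAt_zpow (-8) s (Or.inl hs0)).mul (hg 1 s hs)).const_mul (40:ℂ))).add
      (((hasDerivAt_zpow (-13) s (Or.inl hs0)).mul (hg 2 s hs)).const_mul (25:ℂ))
    refine h.congr_deriv ?_
    simp only [Nat.reduceAdd]
    generalize D 0 (s ^ (-5:ℤ)) = a0
    generalize D 1 (s ^ (-5:ℤ)) = a1
    generalize D 2 (s ^ (-5:ℤ)) = a2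
    generalize D 3 (s ^ (-5:ℤ)) = a3
    try simp only [show (-3-1:ℤ) = -((4:ℕ):ℤ) by norm_num, show (-8-1:ℤ) = -((9:ℕ):ℤ) by norm_num,
      show (-13-1:ℤ) = -((14:ℕ):ℤ) by norm_num]
    try simp only [show (-3:ℤ) = -((3:ℕ):ℤ) by norm_num, show (-4:ℤ) = -((4:ℕ):ℤ) by norm_num,
      show (-8:ℤ) = -((8:ℕ):ℤ) by norm_num, show (-9:ℤ) = -((9:ℕ):ℤ) by norm_num,
      show (-13:ℤ) = -((13:ℕ):ℤ) by norm_num, show (-14:ℤ) = -((14:ℕ):ℤ) by norm_num,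
      show (-19:ℤ) = -((19:ℕ):ℤ) by norm_num]
    simp only [hzy, ← inv_pow]
    try push_cast
    ring
  have hE4 : ∀ s ∈ U, HasDerivAt
      (fun t : ℂ => -(6 * (t ^ (-4:ℤ) * D 0 (t ^ (-5:ℤ)))) - 330 * (t ^ (-9:ℤ) * D 1 (t ^ (-5:ℤ)))
        - 525 * (t ^ (-14:ℤ) * D 2 (t ^ (-5:ℤ))) - 125 * (t ^ (-19:ℤ) * D 3 (t ^ (-5:ℤ))))
      (24 * (s ^ (-5:ℤ) * D 0 (s ^ (-5:ℤ))) + 3000 * (s ^ (-10:ℤ) * D 1 (s ^ (-5:ℤ)))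
        + 9000 * (s ^ (-15:ℤ) * D 2 (s ^ (-5:ℤ))) + 5000 * (s ^ (-20:ℤ) * D 3 (s ^ (-5:ℤ)))
        + 625 * (s ^ (-25:ℤ) * D 4 (s ^ (-5:ℤ)))) s := by
    intro s hs
    have hs0 : s ≠ 0 := hUne s hs
    have h := (((((((hasDerivAt_zpow (-4) s (Or.inl hs0)).mul (hg 0 s hs)).const_mul (6:ℂ)).neg).sub
      (((hasDerivAt_zpow (-9) s (Or.inl hs0)).mul (hg 1 s hs)).const_mul (330:ℂ))).sub
      (((hasDerivAt_zpow (-14) s (Or.inl hs0)).mul (hg 2 s hs)).const_mul (525:ℂ))).sub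
      (((hasDerivAt_zpow (-19) s (Or.inl hs0)).mul (hg 3 s hs)).const_mul (125:ℂ)))
    refine h.congr_deriv ?_
    simp only [Nat.reduceAdd]
    generalize D 0 (s ^ (-5:ℤ)) = a0
    generalize D 1 (s ^ (-5:ℤ)) = a1
    generalize D 2 (s ^ (-5:ℤ)) = a2
    generalize D 3 (s ^ (-5:ℤ)) = a3
    generalize D 4 (s ^ (-5:ℤ)) = a4
    try simp only [show (-4-1:ℤ) = -((5:ℕ):ℤ) by norm_num, show (-9-1:ℤ) = -((10:ℕ):ℤ) by norm_num,
      show (-14-1:ℤ) = -((15:ℕ):ℤ) by norm_num, show (-19-1:ℤ) = -((20:ℕ):ℤ) by norm_num]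
    try simp only [show (-4:ℤ) = -((4:ℕ):ℤ) by norm_num, show (-5:ℤ) = -((5:ℕ):ℤ) by norm_num,
      show (-9:ℤ) = -((9:ℕ):ℤ) by norm_num, show (-10:ℤ) = -((10:ℕ):ℤ) by norm_num,
      show (-14:ℤ) = -((14:ℕ):ℤ) by norm_num, show (-15:ℤ) = -((15:ℕ):ℤ) by norm_num,
      show (-19:ℤ) = -((19:ℕ):ℤ) by norm_num, show (-20:ℤ) = -((20:ℕ):ℤ) by norm_num,
      show (-25:ℤ) = -((25:ℕ):ℤ) by norm_num]
    simp only [hzy, ← inv_pow]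
    try push_cast
    ring
  -- derivative identifications on U
  have hd1 : ∀ s ∈ U, deriv u s
      = -(s ^ (-2:ℤ) * D 0 (s ^ (-5:ℤ))) - 5 * (s ^ (-7:ℤ) * D 1 (s ^ (-5:ℤ))) :=
    fun s hs => (hE1 s hs).deriv
  have hd2 : ∀ s ∈ U, iteratedDeriv 2 u s
      = 2 * (s ^ (-3:ℤ) * D 0 (s ^ (-5:ℤ))) + 40 * (s ^ (-8:ℤ) * D 1 (s ^ (-5:ℤ)))
        + 25 * (s ^ (-13:ℤ) * D 2 (s ^ (-5:ℤ))) := by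
    intro s hs
    have heq : deriv u =ᶠ[nhds s]
        (fun t : ℂ => -(t ^ (-2:ℤ) * D 0 (t ^ (-5:ℤ))) - 5 * (t ^ (-7:ℤ) * D 1 (t ^ (-5:ℤ)))) :=
      Filter.eventually_of_mem (hUopen.mem_nhds hs) hd1
    rw [iteratedDeriv_succ, iteratedDeriv_one, heq.deriv_eq]
    exact (hE2 s hs).deriv
  have hd3 : ∀ s ∈ U, iteratedDeriv 3 u s
      = -(6 * (s ^ (-4:ℤ) * D 0 (s ^ (-5:ℤ)))) - 330 * (s ^ (-9:ℤ) * D 1 (s ^ (-5:ℤ)))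
        - 525 * (s ^ (-14:ℤ) * D 2 (s ^ (-5:ℤ))) - 125 * (s ^ (-19:ℤ) * D 3 (s ^ (-5:ℤ))) := by
    intro s hs
    have heq : iteratedDeriv 2 u =ᶠ[nhds s]
        (fun t : ℂ => 2 * (t ^ (-3:ℤ) * D 0 (t ^ (-5:ℤ))) + 40 * (t ^ (-8:ℤ) * D 1 (t ^ (-5:ℤ)))
          + 25 * (t ^ (-13:ℤ) * D 2 (t ^ (-5:ℤ)))) :=
      Filter.eventually_of_mem (hUopen.mem_nhds hs) hd2
    rw [iteratedDeriv_succ, heq.deriv_eq]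
    exact (hE3 s hs).deriv
  have hd4 : ∀ s ∈ U, iteratedDeriv 4 u s
      = 24 * (s ^ (-5:ℤ) * D 0 (s ^ (-5:ℤ))) + 3000 * (s ^ (-10:ℤ) * D 1 (s ^ (-5:ℤ)))
        + 9000 * (s ^ (-15:ℤ) * D 2 (s ^ (-5:ℤ))) + 5000 * (s ^ (-20:ℤ) * D 3 (s ^ (-5:ℤ)))
        + 625 * (s ^ (-25:ℤ) * D 4 (s ^ (-5:ℤ))) := by
    intro s hs
    have heq : iteratedDeriv 3 u =ᶠ[nhds s]
        (fun t : ℂ => -(6 * (t ^ (-4:ℤ) * D 0 (t ^ (-5:ℤ)))) - 330 * (t ^ (-9:ℤ) * D 1 (t ^ (-5:ℤ)))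
          - 525 * (t ^ (-14:ℤ) * D 2 (t ^ (-5:ℤ))) - 125 * (t ^ (-19:ℤ) * D 3 (t ^ (-5:ℤ)))) :=
      Filter.eventually_of_mem (hUopen.mem_nhds hs) hd3
    rw [iteratedDeriv_succ, heq.deriv_eq]
    exact (hE4 s hs).deriv
  -- conclusion
  intro ψ hψ
  have hψ0 : ψ ≠ 0 := hUne ψ hψ
  have hO := hODE _ (hUV ψ hψ)
  rw [hd4 ψ hψ, hd3 ψ hψ, hd2 ψ hψ, hd1 ψ hψ, hu ψ,
    show w (ψ ^ (-5:ℤ)) = D 0 (ψ ^ (-5:ℤ)) from rfl]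
  set a0 := D 0 (ψ ^ (-5:ℤ)) with ha0
  set a1 := D 1 (ψ ^ (-5:ℤ)) with ha1
  set a2 := D 2 (ψ ^ (-5:ℤ)) with ha2
  set a3 := D 3 (ψ ^ (-5:ℤ)) with ha3
  set a4 := D 4 (ψ ^ (-5:ℤ)) with ha4
  try simp only [show (-2:ℤ) = -((2:ℕ):ℤ) by norm_num, show (-3:ℤ) = -((3:ℕ):ℤ) by norm_num,
    show (-4:ℤ) = -((4:ℕ):ℤ) by norm_num, show (-5:ℤ) = -((5:ℕ):ℤ) by norm_num,
    show (-7:ℤ) = -((7:ℕ):ℤ) by norm_num, show (-8:ℤ) = -((8:ℕ):ℤ) by norm_num,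
    show (-9:ℤ) = -((9:ℕ):ℤ) by norm_num, show (-10:ℤ) = -((10:ℕ):ℤ) by norm_num,
    show (-13:ℤ) = -((13:ℕ):ℤ) by norm_num, show (-14:ℤ) = -((14:ℕ):ℤ) by norm_num,
    show (-15:ℤ) = -((15:ℕ):ℤ) by norm_num, show (-19:ℤ) = -((19:ℕ):ℤ) by norm_num,
    show (-20:ℤ) = -((20:ℕ):ℤ) by norm_num, show (-25:ℤ) = -((25:ℕ):ℤ) by norm_num,
    hzy] at hO ⊢
  have hy : ψ * ψ⁻¹ = 1 := mul_inv_cancel₀ hψ0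
  linear_combination (-625:ℂ) * hO
    + (a0*(ψ*ψ⁻¹ - 14*ψ^2*ψ⁻¹^2 + 36*ψ^3*ψ⁻¹^3 - 24*ψ^4*ψ⁻¹^4)
      + a1*(-625*ψ⁻¹^5 - 625*ψ*ψ⁻¹^6 - 700*ψ^2*ψ⁻¹^7 + 300*ψ^3*ψ⁻¹^8 - 3000*ψ^4*ψ⁻¹^9)
      + a2*(-4375*ψ⁻¹^10 - 4375*ψ*ψ⁻¹^11 - 4375*ψ^2*ψ⁻¹^12 - 3750*ψ^3*ψ⁻¹^13 - 9000*ψ^4*ψ⁻¹^14)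
      + a3*(-3750*ψ⁻¹^15 - 3750*ψ*ψ⁻¹^16 - 3750*ψ^2*ψ⁻¹^17 - 3750*ψ^3*ψ⁻¹^18 - 5000*ψ^4*ψ⁻¹^19)
      + a4*(-625*ψ⁻¹^20 - 625*ψ*ψ⁻¹^21 - 625*ψ^2*ψ⁻¹^22 - 625*ψ^3*ψ⁻¹^23 - 625*ψ^4*ψ⁻¹^24)) * hy
end

section
/- Let U ⊆ ℂ be open and let u : ℂ → ℂ be analytic on U and satisfy, for all ψ ∈ U, the sextic Picard–Fuchs equation (1 − ψ^6)·u^{(5)}(ψ) − 15ψ^5·u^{(4)}(ψ) − 65ψ^4·u'''(ψ) − 90ψ^3·u''(ψ) − 31ψ^2·u'(ψ) − ψ·u(ψ) = 0. Then w = u'' satisfies, for all ψ ∈ U: ψ^2(1 − ψ^6)·w^{(5)}(ψ) − ψ(2 + 25ψ^6)·w^{(4)}(ψ) + (2 − 205ψ^6)·w'''(ψ) − 660ψ^5·w''(ψ) − 781ψ^4·w'(ψ) − 243ψ^3·w(ψ) = 0. -/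
/-- If `u` is analytic on an open set `U ⊆ ℂ` and satisfies the sextic Picard–Fuchs equation
`(1−ψ⁶)u⁽⁵⁾ − 15ψ⁵u⁽⁴⁾ − 65ψ⁴u''' − 90ψ³u'' − 31ψ²u' − ψu = 0` on `U`, then `w = u''` satisfies
`ψ²(1−ψ⁶)w⁽⁵⁾ − ψ(2+25ψ⁶)w⁽⁴⁾ + (2−205ψ⁶)w''' − 660ψ⁵w'' − 781ψ⁴w' − 243ψ³w = 0` on `U`. -/
theorem sextic_second_derivative_ode (U : Set ℂ) (hUopen : IsOpen U)
    (u : ℂ → ℂ) (hu : AnalyticOnNhd ℂ u U)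
    (hode : ∀ ψ ∈ U,
      (1 - ψ ^ 6) * iteratedDeriv 5 u ψ - 15 * ψ ^ 5 * iteratedDeriv 4 u ψ
        - 65 * ψ ^ 4 * iteratedDeriv 3 u ψ - 90 * ψ ^ 3 * iteratedDeriv 2 u ψ
        - 31 * ψ ^ 2 * deriv u ψ - ψ * u ψ = 0)
    (w : ℂ → ℂ) (hw : w = deriv (deriv u)) :
    ∀ ψ ∈ U,
      ψ ^ 2 * (1 - ψ ^ 6) * iteratedDeriv 5 w ψ - ψ * (2 + 25 * ψ ^ 6) * iteratedDeriv 4 w ψ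
        + (2 - 205 * ψ ^ 6) * iteratedDeriv 3 w ψ - 660 * ψ ^ 5 * iteratedDeriv 2 w ψ
        - 781 * ψ ^ 4 * deriv w ψ - 243 * ψ ^ 3 * w ψ = 0 := by
  -- all iterated derivatives of `u` are analytic on `U`
  have hA : ∀ k : ℕ, AnalyticOnNhd ℂ (iteratedDeriv k u) U := by
    intro k
    induction k with
    | zero => simpa using hu
    | succ n ih => rw [iteratedDeriv_succ]; exact ih.deriv
  -- derivative facts
  have hD : ∀ (k : ℕ), ∀ ψ ∈ U,
      HasDerivAt (iteratedDeriv k u) (iteratedDeriv (k + 1) u ψ) ψ := by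
    intro k ψ hψ
    have h := ((hA k ψ hψ).differentiableAt).hasDerivAt
    rwa [iteratedDeriv_succ]
  -- polynomial derivative helpers
  -- the operator L and its first two derivatives
  set v : ℕ → ℂ → ℂ := fun k => iteratedDeriv k u with hv
  have hG0 : ∀ ψ ∈ U,
      (1 - ψ ^ 6) * v 5 ψ - 15 * ψ ^ 5 * v 4 ψ - 65 * ψ ^ 4 * v 3 ψ
        - 90 * ψ ^ 3 * v 2 ψ - 31 * ψ ^ 2 * v 1 ψ - ψ * v 0 ψ = 0 := by
    intro ψ hψ
    have h := hode ψ hψ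
    simp only [hv, iteratedDeriv_zero, iteratedDeriv_one]
    linear_combination h
  -- G is the LHS as a function
  set G : ℂ → ℂ := fun ψ =>
      (1 - ψ ^ 6) * v 5 ψ - 15 * ψ ^ 5 * v 4 ψ - 65 * ψ ^ 4 * v 3 ψ
        - 90 * ψ ^ 3 * v 2 ψ - 31 * ψ ^ 2 * v 1 ψ - ψ * v 0 ψ with hGdef
  have hGderiv : ∀ ψ ∈ U, HasDerivAt G
      ((-(6 * ψ ^ 5)) * v 5 ψ + (1 - ψ ^ 6) * v 6 ψ
        - (15 * (5 * ψ ^ 4) * v 4 ψ + 15 * ψ ^ 5 * v 5 ψ)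
        - (65 * (4 * ψ ^ 3) * v 3 ψ + 65 * ψ ^ 4 * v 4 ψ)
        - (90 * (3 * ψ ^ 2) * v 2 ψ + 90 * ψ ^ 3 * v 3 ψ)
        - (31 * (2 * ψ) * v 1 ψ + 31 * ψ ^ 2 * v 2 ψ)
        - (1 * v 0 ψ + ψ * v 1 ψ)) ψ := by
    intro ψ hψ
    have p6 : HasDerivAt (fun x : ℂ => 1 - x ^ 6) (-(6 * ψ ^ 5)) ψ := by
      simpa using ((hasDerivAt_pow 6 ψ).const_sub 1)
    have q5 : HasDerivAt (fun x : ℂ => 15 * x ^ 5) (15 * (5 * ψ ^ 4)) ψ := by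
      simpa [mul_assoc] using ((hasDerivAt_pow 5 ψ).const_mul (15 : ℂ))
    have q4 : HasDerivAt (fun x : ℂ => 65 * x ^ 4) (65 * (4 * ψ ^ 3)) ψ := by
      simpa [mul_assoc] using ((hasDerivAt_pow 4 ψ).const_mul (65 : ℂ))
    have q3 : HasDerivAt (fun x : ℂ => 90 * x ^ 3) (90 * (3 * ψ ^ 2)) ψ := by
      simpa [mul_assoc] using ((hasDerivAt_pow 3 ψ).const_mul (90 : ℂ))
    have q2 : HasDerivAt (fun x : ℂ => 31 * x ^ 2) (31 * (2 * ψ)) ψ := by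
      simpa [mul_assoc] using ((hasDerivAt_pow 2 ψ).const_mul (31 : ℂ))
    have q1 : HasDerivAt (fun x : ℂ => x) (1 : ℂ) ψ := hasDerivAt_id ψ
    exact (((((p6.mul (hD 5 ψ hψ)).sub (q5.mul (hD 4 ψ hψ))).sub
      (q4.mul (hD 3 ψ hψ))).sub (q3.mul (hD 2 ψ hψ))).sub
      (q2.mul (hD 1 ψ hψ))).sub (q1.mul (hD 0 ψ hψ))
  -- G vanishes on U, hence so does its derivative on U
  have hGzero : ∀ ψ ∈ U, G ψ = 0 := hG0
  have hG1 : ∀ ψ ∈ U,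
      (1 - ψ ^ 6) * v 6 ψ - 21 * ψ ^ 5 * v 5 ψ - 140 * ψ ^ 4 * v 4 ψ
        - 350 * ψ ^ 3 * v 3 ψ - 301 * ψ ^ 2 * v 2 ψ - 63 * ψ * v 1 ψ - v 0 ψ = 0 := by
    intro ψ hψ
    have heq : G =ᶠ[nhds ψ] (fun _ => (0 : ℂ)) :=
      Filter.eventuallyEq_of_mem (hUopen.mem_nhds hψ) hGzero
    have hd0 : deriv G ψ = 0 := by rw [heq.deriv_eq]; simp
    have hd1 := (hGderiv ψ hψ).deriv
    rw [hd0] at hd1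
    linear_combination -hd1
  -- second derivative: define G1 and differentiate again
  set G1 : ℂ → ℂ := fun ψ =>
      (1 - ψ ^ 6) * v 6 ψ - 21 * ψ ^ 5 * v 5 ψ - 140 * ψ ^ 4 * v 4 ψ
        - 350 * ψ ^ 3 * v 3 ψ - 301 * ψ ^ 2 * v 2 ψ - 63 * ψ * v 1 ψ - v 0 ψ with hG1def
  have hG1deriv : ∀ ψ ∈ U, HasDerivAt G1
      ((-(6 * ψ ^ 5)) * v 6 ψ + (1 - ψ ^ 6) * v 7 ψ
        - (21 * (5 * ψ ^ 4) * v 5 ψ + 21 * ψ ^ 5 * v 6 ψ)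
        - (140 * (4 * ψ ^ 3) * v 4 ψ + 140 * ψ ^ 4 * v 5 ψ)
        - (350 * (3 * ψ ^ 2) * v 3 ψ + 350 * ψ ^ 3 * v 4 ψ)
        - (301 * (2 * ψ) * v 2 ψ + 301 * ψ ^ 2 * v 3 ψ)
        - (63 * v 1 ψ + 63 * ψ * v 2 ψ)
        - v 1 ψ) ψ := by
    intro ψ hψ
    have p6 : HasDerivAt (fun x : ℂ => 1 - x ^ 6) (-(6 * ψ ^ 5)) ψ := by
      simpa using ((hasDerivAt_pow 6 ψ).const_sub 1)
    have q5 : HasDerivAt (fun x : ℂ => 21 * x ^ 5) (21 * (5 * ψ ^ 4)) ψ := by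
      simpa [mul_assoc] using ((hasDerivAt_pow 5 ψ).const_mul (21 : ℂ))
    have q4 : HasDerivAt (fun x : ℂ => 140 * x ^ 4) (140 * (4 * ψ ^ 3)) ψ := by
      simpa [mul_assoc] using ((hasDerivAt_pow 4 ψ).const_mul (140 : ℂ))
    have q3 : HasDerivAt (fun x : ℂ => 350 * x ^ 3) (350 * (3 * ψ ^ 2)) ψ := by
      simpa [mul_assoc] using ((hasDerivAt_pow 3 ψ).const_mul (350 : ℂ))
    have q2 : HasDerivAt (fun x : ℂ => 301 * x ^ 2) (301 * (2 * ψ)) ψ := by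
      simpa [mul_assoc] using ((hasDerivAt_pow 2 ψ).const_mul (301 : ℂ))
    have q1 : HasDerivAt (fun x : ℂ => 63 * x) (63 : ℂ) ψ := by
      simpa using (hasDerivAt_id ψ).const_mul (63 : ℂ)
    exact ((((((p6.mul (hD 6 ψ hψ)).sub (q5.mul (hD 5 ψ hψ))).sub
      (q4.mul (hD 4 ψ hψ))).sub (q3.mul (hD 3 ψ hψ))).sub
      (q2.mul (hD 2 ψ hψ))).sub (q1.mul (hD 1 ψ hψ))).sub (hD 0 ψ hψ)
  have hG2 : ∀ ψ ∈ U,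
      (1 - ψ ^ 6) * v 7 ψ - 27 * ψ ^ 5 * v 6 ψ - 245 * ψ ^ 4 * v 5 ψ
        - 910 * ψ ^ 3 * v 4 ψ - 1351 * ψ ^ 2 * v 3 ψ - 665 * ψ * v 2 ψ
        - 64 * v 1 ψ = 0 := by
    intro ψ hψ
    have heq : G1 =ᶠ[nhds ψ] (fun _ => (0 : ℂ)) :=
      Filter.eventuallyEq_of_mem (hUopen.mem_nhds hψ) hG1
    have hd0 : deriv G1 ψ = 0 := by rw [heq.deriv_eq]; simp
    have hd1 := (hG1deriv ψ hψ).deriv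
    rw [hd0] at hd1
    linear_combination -hd1
  -- now translate to `w`
  intro ψ hψ
  have hw2 : w = iteratedDeriv 2 u := by
    rw [hw, iteratedDeriv_succ', iteratedDeriv_one]
  have hk : ∀ k : ℕ, iteratedDeriv k w = iteratedDeriv (k + 2) u := by
    intro k
    rw [hw2]
    induction k with
    | zero => simp
    | succ n ih => rw [iteratedDeriv_succ, ih, ← iteratedDeriv_succ]
  have hdw : deriv w = iteratedDeriv 3 u := by
    rw [← iteratedDeriv_one, hk 1]
  rw [hk 5, hk 4, hk 3, hk 2, hdw, hw2]
  have e0 := hG0 ψ hψ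
  have e1 := hG1 ψ hψ
  have e2 := hG2 ψ hψ
  simp only [hv] at e0 e1 e2
  linear_combination ψ ^ 2 * e2 - 2 * ψ * e1 + 2 * e0
end

section
/- Let F_∞ be the 5×5 rational matrix with rows (75/64, 0, −15/8, 0, −1/4), (0, −1, 0, 0, 0), (55/256, 0, −43/32, 0, −5/16), (0, 0, 0, −1, 0), (−121/1024, 0, 165/128, 0, 75/64), and consider the rational vectors ρ_1 = (1, 0, −3/4, 0, 101/16), ρ_2 = (1, 2, 5/4, −5/2, −11/16), ρ_3 = (1, 0, 7/12, 0, −59/16), ρ_4 = (3/2, 1, 15/8, 11/4, −33/32), ρ_5 = (1, 1/2, 5/4, 13/8, −11/16). Then F_∞·ρ_1 = ρ_1, F_∞·ρ_2 = −ρ_2, F_∞·ρ_3 = ρ_3, F_∞·ρ_4 = −ρ_4 and F_∞·ρ_5 = −ρ_5. -/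
/-- The involution `F_∞` of the Fermat sextic, in the rational basis `α`. -/
def FinfSextic : Matrix (Fin 5) (Fin 5) ℚ :=
  !![75/64, 0, -15/8, 0, -1/4;
     0, -1, 0, 0, 0;
     55/256, 0, -43/32, 0, -5/16;
     0, 0, 0, -1, 0;
     -121/1024, 0, 165/128, 0, 75/64]

def sexticRho1 : Fin 5 → ℚ := ![1, 0, -3/4, 0, 101/16]
def sexticRho2 : Fin 5 → ℚ := ![1, 2, 5/4, -5/2, -11/16]
def sexticRho3 : Fin 5 → ℚ := ![1, 0, 7/12, 0, -59/16]
def sexticRho4 : Fin 5 → ℚ := ![3/2, 1, 15/8, 11/4, -33/32]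
def sexticRho5 : Fin 5 → ℚ := ![1, 1/2, 5/4, 13/8, -11/16]

/-- `ρ₁, ρ₃` are eigenvectors of `F_∞` with eigenvalue `+1`, and `ρ₂, ρ₄, ρ₅` are eigenvectors
with eigenvalue `−1`. -/
theorem sextic_Finfty_eigenvectors :
    FinfSextic.mulVec sexticRho1 = sexticRho1 ∧
    FinfSextic.mulVec sexticRho2 = -sexticRho2 ∧
    FinfSextic.mulVec sexticRho3 = sexticRho3 ∧
    FinfSextic.mulVec sexticRho4 = -sexticRho4 ∧
    FinfSextic.mulVec sexticRho5 = -sexticRho5 := by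
  refine ⟨?_, ?_, ?_, ?_, ?_⟩ <;>
  · funext i
    fin_cases i <;>
      simp [FinfSextic, sexticRho1, sexticRho2, sexticRho3, sexticRho4, sexticRho5,
        Matrix.mulVec, dotProduct, Fin.sum_univ_five] <;> norm_num
end

section
/- Let J be the 7×7 antidiagonal matrix with nonzero entries J_{0,6} = 1, J_{1,5} = −6, J_{2,4} = 15, J_{3,3} = −20, J_{4,2} = 15, J_{5,1} = −6, J_{6,0} = 1, and consider the vectors in ℝ^7: ρ_1 = (1, 0, 1/3 − √2, 0, 53/10 + 9√2, 0, −593/2 − (651/2)√2), ρ_2 = (1, 2 + √2, 7/3, −2 − 4√2, −7/10, 395/3 + (605/6)√2, 229/2), ρ_3 = (1, 0, 4/3, 0, −97/10, 0, 239), ρ_4 = (1, 1, 7/3, 5, −7/10, −205/6, 229/2), ρ_5 = (1, 0, 1/3 + √2, 0, 53/10 − 9√2, 0, −593/2 + (651/2)√2), ρ_6 = (1, 2 − √2, 7/3, −2 + 4√2, −7/10, 395/3 − (605/6)√2, 229/2), ρ_7 = (1, 1/2, 7/3, 13/4, −7/10, −85/12, 229/2). Then ρ_iᵀ J ρ_7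 = 0 for every i ∈ {1, …, 6}, and the seven vectors ρ_1, …, ρ_7 are linearly independent over ℝ; hence ρ_7 spans the orthogonal complement of the span of ρ_1, …, ρ_6 with respect to the bilinear form J. -/
open Matrix

/-- The cup product pairing matrix of the Fermat octic sixfold, in the rational basis `α`. -/
noncomputable def octicJ : Matrix (Fin 7) (Fin 7) ℝ :=
  !![0, 0, 0, 0, 0, 0, 1;
     0, 0, 0, 0, 0, -6, 0;
     0, 0, 0, 0, 15, 0, 0;
     0, 0, 0, -20, 0, 0, 0;
     0, 0, 15, 0, 0, 0, 0;
     0, -6, 0, 0, 0, 0, 0;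
     1, 0, 0, 0, 0, 0, 0]

noncomputable def octicRho1 : Fin 7 → ℝ :=
  ![1, 0, 1/3 - Real.sqrt 2, 0, 53/10 + 9 * Real.sqrt 2, 0,
    -593/2 - (651/2) * Real.sqrt 2]
noncomputable def octicRho2 : Fin 7 → ℝ :=
  ![1, 2 + Real.sqrt 2, 7/3, -2 - 4 * Real.sqrt 2, -7/10,
    395/3 + (605/6) * Real.sqrt 2, 229/2]
noncomputable def octicRho3 : Fin 7 → ℝ :=
  ![1, 0, 4/3, 0, -97/10, 0, 239]
noncomputable def octicRho4 : Fin 7 → ℝ :=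
  ![1, 1, 7/3, 5, -7/10, -205/6, 229/2]
noncomputable def octicRho5 : Fin 7 → ℝ :=
  ![1, 0, 1/3 + Real.sqrt 2, 0, 53/10 - 9 * Real.sqrt 2, 0,
    -593/2 + (651/2) * Real.sqrt 2]
noncomputable def octicRho6 : Fin 7 → ℝ :=
  ![1, 2 - Real.sqrt 2, 7/3, -2 + 4 * Real.sqrt 2, -7/10,
    395/3 - (605/6) * Real.sqrt 2, 229/2]
noncomputable def octicRho7 : Fin 7 → ℝ :=
  ![1, 1/2, 7/3, 13/4, -7/10, -85/12, 229/2]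

lemma octic_v7_0 {α : Type*} (a b c d e f g : α) : ![a,b,c,d,e,f,g] 0 = a := rfl
lemma octic_v7_1 {α : Type*} (a b c d e f g : α) : ![a,b,c,d,e,f,g] 1 = b := rfl
lemma octic_v7_2 {α : Type*} (a b c d e f g : α) : ![a,b,c,d,e,f,g] 2 = c := rfl
lemma octic_v7_3 {α : Type*} (a b c d e f g : α) : ![a,b,c,d,e,f,g] 3 = d := rfl
lemma octic_v7_4 {α : Type*} (a b c d e f g : α) : ![a,b,c,d,e,f,g] 4 = e := rfl
lemma octic_v7_5 {α : Type*} (a b c d e f g : α) : ![a,b,c,d,e,f,g] 5 = f := rfl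
lemma octic_v7_6 {α : Type*} (a b c d e f g : α) : ![a,b,c,d,e,f,g] 6 = g := rfl

lemma octic_v7m_0 {α : Type*} (a b c d e f g : α) (h : (0:ℕ) < 7) : ![a,b,c,d,e,f,g] ⟨0,h⟩ = a := rfl
lemma octic_v7m_1 {α : Type*} (a b c d e f g : α) (h : (1:ℕ) < 7) : ![a,b,c,d,e,f,g] ⟨1,h⟩ = b := rfl
lemma octic_v7m_2 {α : Type*} (a b c d e f g : α) (h : (2:ℕ) < 7) : ![a,b,c,d,e,f,g] ⟨2,h⟩ = c := rfl
lemma octic_v7m_3 {α : Type*} (a b c d e f g : α) (h : (3:ℕ) < 7) : ![a,b,c,d,e,f,g] ⟨3,h⟩ = d := rfl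
lemma octic_v7m_4 {α : Type*} (a b c d e f g : α) (h : (4:ℕ) < 7) : ![a,b,c,d,e,f,g] ⟨4,h⟩ = e := rfl
lemma octic_v7m_5 {α : Type*} (a b c d e f g : α) (h : (5:ℕ) < 7) : ![a,b,c,d,e,f,g] ⟨5,h⟩ = f := rfl
lemma octic_v7m_6 {α : Type*} (a b c d e f g : α) (h : (6:ℕ) < 7) : ![a,b,c,d,e,f,g] ⟨6,h⟩ = g := rfl

lemma octic_cons_val_five {α : Type*} {m : ℕ} (x : α) (u : Fin (m+5) → α) :
    Matrix.vecCons x u 5 = Matrix.vecHead (Matrix.vecTail (Matrix.vecTail (Matrix.vecTail (Matrix.vecTail u)))) := rfl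
lemma octic_cons_val_six {α : Type*} {m : ℕ} (x : α) (u : Fin (m+6) → α) :
    Matrix.vecCons x u 6 = Matrix.vecHead (Matrix.vecTail (Matrix.vecTail (Matrix.vecTail (Matrix.vecTail (Matrix.vecTail u))))) := rfl

noncomputable def octicB : Matrix (Fin 7) (Fin 7) ℝ :=
  !![(-55/48) + (767/720) * Real.sqrt 2, (-3893/720) + (229/60) * Real.sqrt 2, (239/90), (229/180), (-55/48) + (-767/720) * Real.sqrt 2, (-3893/720) + (-229/60) * Real.sqrt 2, (458/45) ;
    0, (-109/36) + (161/72) * Real.sqrt 2, 0, (41/18), 0, (-109/36) + (-161/72) * Real.sqrt 2, (34/9) ;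
    (67/80) + (-41/60) * Real.sqrt 2, (119/240) + (-7/20) * Real.sqrt 2, (-97/60), (-7/60), (67/80) + (41/60) * Real.sqrt 2, (119/240) + (7/20) * Real.sqrt 2, (-14/15) ;
    0, (31/9) + (-22/9) * Real.sqrt 2, 0, (-10/9), 0, (31/9) + (22/9) * Real.sqrt 2, (-52/9) ;
    (-5/24) + (11/72) * Real.sqrt 2, (-119/72) + (7/6) * Real.sqrt 2, (2/9), (7/18), (-5/24) + (-11/72) * Real.sqrt 2, (-119/72) + (-7/6) * Real.sqrt 2, (28/9) ;
    0, (1/6) + (-7/60) * Real.sqrt 2, 0, (-1/15), 0, (1/6) + (7/60) * Real.sqrt 2, (-4/15) ;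
    (-1/120) + (1/180) * Real.sqrt 2, (-17/360) + (1/30) * Real.sqrt 2, (1/90), (1/90), (-1/120) + (-1/180) * Real.sqrt 2, (-17/360) + (-1/30) * Real.sqrt 2, (4/45)]

set_option maxHeartbeats 1600000 in
/-- `ρ_iᵀ J ρ₇ = 0` for `i = 1, …, 6`, and `ρ₁, …, ρ₇` are linearly independent over `ℝ`;
hence `ρ₇` spans the orthogonal complement of `span(ρ₁, …, ρ₆)` with respect to `J`. -/
theorem octic_rho7_orthogonal :
    (octicRho1 ⬝ᵥ octicJ.mulVec octicRho7 = 0) ∧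
    (octicRho2 ⬝ᵥ octicJ.mulVec octicRho7 = 0) ∧
    (octicRho3 ⬝ᵥ octicJ.mulVec octicRho7 = 0) ∧
    (octicRho4 ⬝ᵥ octicJ.mulVec octicRho7 = 0) ∧
    (octicRho5 ⬝ᵥ octicJ.mulVec octicRho7 = 0) ∧
    (octicRho6 ⬝ᵥ octicJ.mulVec octicRho7 = 0) ∧
    LinearIndependent ℝ
      ![octicRho1, octicRho2, octicRho3, octicRho4, octicRho5, octicRho6, octicRho7] := by

  have hs : Real.sqrt 2 * Real.sqrt 2 = 2 := Real.mul_self_sqrt (by norm_num)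
  refine ⟨?_, ?_, ?_, ?_, ?_, ?_, ?_⟩
  · simp only [octicRho1, octicRho7, octicJ, Matrix.mulVec, dotProduct,
      Fin.sum_univ_succ, Fin.sum_univ_zero, Matrix.cons_val_zero, Matrix.cons_val_succ,
      Matrix.cons_val', Matrix.empty_val', Matrix.cons_val_fin_one, Matrix.of_apply]
    linear_combination (0 : ℝ) * hs
  · simp only [octicRho2, octicRho7, octicJ, Matrix.mulVec, dotProduct,
      Fin.sum_univ_succ, Fin.sum_univ_zero, Matrix.cons_val_zero, Matrix.cons_val_succ,
      Matrix.cons_val', Matrix.empty_val', Matrix.cons_val_fin_one, Matrix.of_apply]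
    linear_combination (0 : ℝ) * hs
  · simp only [octicRho3, octicRho7, octicJ, Matrix.mulVec, dotProduct,
      Fin.sum_univ_succ, Fin.sum_univ_zero, Matrix.cons_val_zero, Matrix.cons_val_succ,
      Matrix.cons_val', Matrix.empty_val', Matrix.cons_val_fin_one, Matrix.of_apply]
    linear_combination (0 : ℝ) * hs
  · simp only [octicRho4, octicRho7, octicJ, Matrix.mulVec, dotProduct,
      Fin.sum_univ_succ, Fin.sum_univ_zero, Matrix.cons_val_zero, Matrix.cons_val_succ,
      Matrix.cons_val', Matrix.empty_val', Matrix.cons_val_fin_one, Matrix.of_apply]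
    linear_combination (0 : ℝ) * hs
  · simp only [octicRho5, octicRho7, octicJ, Matrix.mulVec, dotProduct,
      Fin.sum_univ_succ, Fin.sum_univ_zero, Matrix.cons_val_zero, Matrix.cons_val_succ,
      Matrix.cons_val', Matrix.empty_val', Matrix.cons_val_fin_one, Matrix.of_apply]
    linear_combination (0 : ℝ) * hs
  · simp only [octicRho6, octicRho7, octicJ, Matrix.mulVec, dotProduct,
      Fin.sum_univ_succ, Fin.sum_univ_zero, Matrix.cons_val_zero, Matrix.cons_val_succ,
      Matrix.cons_val', Matrix.empty_val', Matrix.cons_val_fin_one, Matrix.of_apply]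
    linear_combination (0 : ℝ) * hs
  · have h1 : (Matrix.of ![octicRho1, octicRho2, octicRho3, octicRho4, octicRho5,
        octicRho6, octicRho7]) * octicB = 1 := by
      ext i j
      fin_cases i <;> fin_cases j <;>
        simp only [octicB, octicRho1, octicRho2, octicRho3, octicRho4, octicRho5,
          octicRho6, octicRho7, Matrix.mul_apply, Fin.sum_univ_succ, Fin.sum_univ_zero,
          Matrix.cons_val_zero, Matrix.cons_val_succ, Matrix.cons_val', Matrix.empty_val',
          Matrix.cons_val_fin_one, Matrix.of_apply, Matrix.one_apply, Fin.isValue,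
          Fin.mk_zero, Fin.mk_one, ite_true, ite_false, Fin.reduceEq, reduceIte,
          Fin.zero_eta, octic_v7_0, octic_v7_1, octic_v7_2, octic_v7_3, octic_v7_4,
          octic_v7_5, octic_v7_6,
          octic_v7m_0, octic_v7m_1, octic_v7m_2, octic_v7m_3, octic_v7m_4, octic_v7m_5,
          octic_v7m_6, Matrix.cons_val_one, Matrix.cons_val_two, Matrix.cons_val_three,
          Matrix.cons_val_four, octic_cons_val_five, octic_cons_val_six, Matrix.vecHead,
          Matrix.vecTail, Function.comp, Fin.ext_iff, Fin.val_zero, Fin.val_one]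
      · try norm_num
        try linear_combination ((1/4) : ℝ) * hs
      · try norm_num
        try linear_combination (0 : ℝ) * hs
      · try norm_num
        try linear_combination (0 : ℝ) * hs
      · try norm_num
        try linear_combination (0 : ℝ) * hs
      · try norm_num
        try linear_combination ((-1/4) : ℝ) * hs
      · try norm_num
        try linear_combination (0 : ℝ) * hs
      · try norm_num
        try linear_combination (0 : ℝ) * hs
      · try norm_num
        try linear_combination (0 : ℝ) * hs
      · try norm_num
        try linear_combination ((1/4) : ℝ) * hs
      · try norm_num
        try linear_combination (0 : ℝ) * hs
      · try norm_num
        try linear_combination (0 : ℝ) * hs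
      · try norm_num
        try linear_combination (0 : ℝ) * hs
      · try norm_num
        try linear_combination ((-1/4) : ℝ) * hs
      · try norm_num
        try linear_combination (0 : ℝ) * hs
      · try norm_num
        try linear_combination (0 : ℝ) * hs
      · try norm_num
        try linear_combination (0 : ℝ) * hs
      · try norm_num
        try linear_combination (0 : ℝ) * hs
      · try norm_num
        try linear_combination (0 : ℝ) * hs
      · try norm_num
        try linear_combination (0 : ℝ) * hs
      · try norm_num
        try linear_combination (0 : ℝ) * hs
      · try norm_num
        try linear_combination (0 : ℝ) * hs
      · try norm_num
        try linear_combination (0 : ℝ) * hs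
      · try norm_num
        try linear_combination (0 : ℝ) * hs
      · try norm_num
        try linear_combination (0 : ℝ) * hs
      · try norm_num
        try linear_combination (0 : ℝ) * hs
      · try norm_num
        try linear_combination (0 : ℝ) * hs
      · try norm_num
        try linear_combination (0 : ℝ) * hs
      · try norm_num
        try linear_combination (0 : ℝ) * hs
      · try norm_num
        try linear_combination ((-1/4) : ℝ) * hs
      · try norm_num
        try linear_combination (0 : ℝ) * hs
      · try norm_num
        try linear_combination (0 : ℝ) * hs
      · try norm_num
        try linear_combination (0 : ℝ) * hs
      · try norm_num
        try linear_combination ((1/4) : ℝ) * hs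
      · try norm_num
        try linear_combination (0 : ℝ) * hs
      · try norm_num
        try linear_combination (0 : ℝ) * hs
      · try norm_num
        try linear_combination (0 : ℝ) * hs
      · try norm_num
        try linear_combination ((-1/4) : ℝ) * hs
      · try norm_num
        try linear_combination (0 : ℝ) * hs
      · try norm_num
        try linear_combination (0 : ℝ) * hs
      · try norm_num
        try linear_combination (0 : ℝ) * hs
      · try norm_num
        try linear_combination ((1/4) : ℝ) * hs
      · try norm_num
        try linear_combination (0 : ℝ) * hs
      · try norm_num
        try linear_combination (0 : ℝ) * hs
      · try norm_num
        try linear_combination (0 : ℝ) * hs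
      · try norm_num
        try linear_combination (0 : ℝ) * hs
      · try norm_num
        try linear_combination (0 : ℝ) * hs
      · try norm_num
        try linear_combination (0 : ℝ) * hs
      · try norm_num
        try linear_combination (0 : ℝ) * hs
      · try norm_num
        try linear_combination (0 : ℝ) * hs
    have hu : IsUnit (Matrix.of ![octicRho1, octicRho2, octicRho3, octicRho4, octicRho5,
        octicRho6, octicRho7]) :=
      isUnit_iff_exists.mpr ⟨octicB, h1, mul_eq_one_comm.mp h1⟩
    exact Matrix.linearIndependent_rows_iff_isUnit.mpr hu
end
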